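/- arXiv:2211.05252 — 2 statements merged into one kernel-verified Lean document; each statement's English description precedes it below -/
import Mathlib

section
/- Let p be an odd prime, let D be an integer that is not a perfect square, and suppose there exists α₀ ∈ ℚ_p with α₀² = D. Let (α_n), (b_n) be the sequences produced by Browkin's second algorithm applied to α₀. If the expansion is periodic, then its pre-period has length either 1 or even. -/
/-- A rational number `a` is a `p`-adic fraction if `a * p^m` is an integer
for some natural number `m`, i.e. `a ∈ ℤ[1/p]`. -/
def IsPadicFrac (p : ℕ) (a : ℚ) : Prop := ∃ (m : ℕ) (z : ℤ), a * (p : ℚ) ^ m = (z : ℚ)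

/-- `b` is Browkin's integral floor `s α`: the unique `p`-adic fraction with
`|b| < p/2` and `‖α - b‖_p < 1`. -/
def IsIntFloor (p : ℕ) [Fact p.Prime] (α : ℚ_[p]) (b : ℚ) : Prop :=
  IsPadicFrac p b ∧ |b| < (p : ℚ) / 2 ∧ ‖α - (b : ℚ_[p])‖ < 1

/-- `b` is Browkin's fractional floor `t α`: the unique `p`-adic fraction with
`|b| < 1/2` and `‖α - b‖_p ≤ 1`. -/
def IsFracFloor (p : ℕ) [Fact p.Prime] (α : ℚ_[p]) (b : ℚ) : Prop :=
  IsPadicFrac p b ∧ |b| < 1 / 2 ∧ ‖α - (b : ℚ_[p])‖ ≤ 1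

/-- Browkin's second algorithm: `b n = s (α n)` for even `n`; for odd `n`,
`b n = t (α n)` if `‖α n - t (α n)‖_p = 1`, and `b n = t (α n) - sign (t (α n))`
if `‖α n - t (α n)‖_p < 1`; and `α (n + 1) = (α n - b n)⁻¹`. -/
def Alg2 (p : ℕ) [Fact p.Prime] (α : ℕ → ℚ_[p]) (b : ℕ → ℚ) : Prop :=
  (∀ n, Even n → IsIntFloor p (α n) (b n)) ∧
  (∀ n, Odd n → ∃ c : ℚ, IsFracFloor p (α n) c ∧
    ((‖α n - (c : ℚ_[p])‖ = 1 ∧ b n = c) ∨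
     (‖α n - (c : ℚ_[p])‖ < 1 ∧
       b n = c - (if 0 < c then 1 else if c < 0 then -1 else 0)))) ∧
  ∀ n, α (n + 1) = (α n - (b n : ℚ_[p]))⁻¹

/-!
For odd `n` one has `‖α n‖ ≥ p`, `‖α n - b n‖ = 1` and `‖b n‖ ≥ p`, while for even `n ≥ 2`
one has `‖α n‖ = ‖b n‖ = 1` and `‖α n - b n‖ ≤ p⁻¹`; hence every period `k` is even.
Suppose the pre-period is odd, `2 j + 1` with `j ≥ 1`. Then `‖α n - α (n + k)‖` is multiplied by
at least `p ^ 2` every two steps from `n = 2 j + 2` on while staying bounded, so it vanishes and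
`α (2 j + 1 + k) = α (2 j + 1)`. The Galois conjugates `γ n` (the complete quotients of `-α₀`
with the same partial quotients) then repeat as well, and since `‖γ n‖ ≤ p⁻¹` for even `n ≥ 2`
(this is where `p` odd and `D ∈ ℤ` enter), `b (2 j) - b (2 j + k) = γ (2 j) - γ (2 j + k)` is a
`p`-adic fraction of `p`-adic norm `< 1` and absolute value `< p`, hence `0`. So the expansion is
periodic from `2 j` on, contradicting minimality.
-/

section Ultrametric

variable {S : Type*} [SeminormedAddGroup S] [IsUltrametricDist S] {x y : S}

theorem norm_add_eq_left_of_lt (h : ‖y‖ < ‖x‖) : ‖x + y‖ = ‖x‖ := by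
  rw [IsUltrametricDist.norm_add_eq_max_of_norm_ne_norm h.ne', max_eq_left h.le]

theorem norm_sub_le_max (x y : S) : ‖x - y‖ ≤ max ‖x‖ ‖y‖ := by
  simpa only [sub_eq_add_neg, norm_neg] using IsUltrametricDist.norm_add_le_max x (-y)

theorem norm_sub_eq_right_of_lt (h : ‖x‖ < ‖y‖) : ‖x - y‖ = ‖y‖ := by
  rw [← norm_neg y] at h ⊢
  rw [sub_eq_add_neg, IsUltrametricDist.norm_add_eq_max_of_norm_ne_norm h.ne, max_eq_right h.le]

end Ultrametric

theorem nonpos_of_forall_pow_mul_le {c x B : ℝ} (hc : 1 < c) (h : ∀ i : ℕ, c ^ i * x ≤ B) :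
    x ≤ 0 := by
  by_contra! hx
  obtain ⟨i, hi⟩ := pow_unbounded_of_one_lt (B / x) hc
  linarith [h i, (div_lt_iff₀ hx).1 hi]

namespace Padic

variable {p : ℕ} [Fact p.Prime]

theorem norm_le_inv_of_norm_lt_one {x : ℚ_[p]} (h : ‖x‖ < 1) : ‖x‖ ≤ (p : ℝ)⁻¹ := by
  simpa using (norm_le_pow_iff_norm_lt_pow_add_one x (-1)).2 (by simpa using h)

theorem norm_add_eq_of_norm_sub_lt (hp : p ≠ 2) {x y : ℚ_[p]} (h : ‖x - y‖ < ‖y‖) :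
    ‖x + y‖ = ‖y‖ := by
  have h2 : ‖(2 : ℚ_[p])‖ = 1 := by
    exact_mod_cast norm_natCast_eq_one_iff.2
      ((Nat.coprime_primes Fact.out Nat.prime_two).2 hp)
  have h2y : ‖2 * y‖ = ‖y‖ := by rw [norm_mul, h2, one_mul]
  rw [show x + y = 2 * y + (x - y) by ring, norm_add_eq_left_of_lt (h2y ▸ h), h2y]

end Padic

namespace IsPadicFrac

variable {p : ℕ}

theorem sub {a c : ℚ} (ha : IsPadicFrac p a) (hc : IsPadicFrac p c) : IsPadicFrac p (a - c) := by
  obtain ⟨m, z, hz⟩ := ha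
  obtain ⟨n, w, hw⟩ := hc
  refine ⟨m + n, z * p ^ n - w * p ^ m, ?_⟩
  push_cast
  linear_combination (p : ℚ) ^ n * hz - (p : ℚ) ^ m * hw

theorem eq_zero_of_norm_lt_one [Fact p.Prime] {a : ℚ} (ha : IsPadicFrac p a)
    (hn : ‖(a : ℚ_[p])‖ < 1) (hlt : |a| < p) : a = 0 := by
  obtain ⟨m, z, hz⟩ := ha
  have hp : (0 : ℚ) < p := mod_cast (Fact.out : p.Prime).pos
  have hpR : (0 : ℝ) < p := mod_cast hp
  have hzn : ‖(z : ℚ_[p])‖ < (p : ℝ) ^ (-(m : ℤ) - 1 + 1) := by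
    rw [← Rat.cast_intCast, ← hz, Rat.cast_mul, norm_mul, Rat.cast_pow, norm_pow, Rat.cast_natCast,
      Padic.norm_p, sub_add_cancel, zpow_neg, zpow_natCast, inv_pow]
    exact mul_lt_of_lt_one_left (inv_pos.2 (pow_pos hpR m)) hn
  obtain ⟨w, hw⟩ : ((p : ℤ) ^ (m + 1)) ∣ z := by
    rw [← Padic.norm_int_le_pow_iff_dvd]
    convert (Padic.norm_le_pow_iff_norm_lt_pow_add_one _ _).2 hzn using 2
    push_cast; ring
  have haw : a = p * w := by
    apply mul_right_cancel₀ (pow_ne_zero m hp.ne')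
    rw [hz, hw]; push_cast; ring
  have hw0 : w = 0 := by
    rw [haw, abs_mul, abs_of_pos hp] at hlt
    have : |(w : ℚ)| < 1 := (mul_lt_iff_lt_one_right hp).1 hlt
    exact Int.abs_lt_one_iff.1 (by exact_mod_cast this)
  simp [haw, hw0]

end IsPadicFrac

def completeQuotients {K : Type*} [DivisionRing K] (z : K) (b : ℕ → ℚ) : ℕ → K
  | 0 => z
  | n + 1 => (completeQuotients z b n - b n)⁻¹

theorem map_completeQuotients {K L : Type*} [DivisionRing K] [DivisionRing L] (f : K →+* L)
    (z : K) (b : ℕ → ℚ) (n : ℕ) : f (completeQuotients z b n) = completeQuotients (f z) b n := by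
  induction n with
  | zero => rfl
  | succ n ih => simp only [completeQuotients, map_inv₀, map_sub, map_ratCast, ih]

/-- Both sequences are images of the complete quotients of `ω` in the field
`QuadraticAlgebra ℚ D 0`, under its embeddings `ω ↦ x` and `ω ↦ -x`; the first is injective. -/
theorem completeQuotients_neg_eq_of_eq {L : Type*} [Field L] [CharZero L] {D : ℚ}
    (hD : ∀ r : ℚ, r ^ 2 ≠ D) {x : L} (hx : x ^ 2 = D) (b : ℕ → ℚ) {m n : ℕ}
    (h : completeQuotients x b m = completeQuotients x b n) :
    completeQuotients (-x) b m = completeQuotients (-x) b n := by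
  have : Fact (∀ r : ℚ, r ^ 2 ≠ D + 0 * r) := ⟨by simpa using hD⟩
  let embed (y : L) (hy : y ^ 2 = D) : QuadraticAlgebra ℚ D 0 →+* L :=
    QuadraticAlgebra.lift (a := D) (b := 0) ⟨y, by simp [← sq, hy, Algebra.smul_def]⟩
  have hcq (y : L) (hy : y ^ 2 = D) (i : ℕ) :
      completeQuotients y b i = embed y hy (completeQuotients .omega b i) := by
    rw [map_completeQuotients]; simp [embed]
  rw [hcq x hx, hcq x hx] at h
  rw [hcq (-x) (by rw [neg_sq, hx]), hcq (-x) (by rw [neg_sq, hx]), (embed x hx).injective h]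

namespace Alg2

variable {p : ℕ} [Fact p.Prime] {α : ℕ → ℚ_[p]} {b : ℕ → ℚ}

theorem eq_completeQuotients (halg : Alg2 p α b) (n : ℕ) :
    α n = completeQuotients (α 0) b n := by
  induction n with
  | zero => rfl
  | succ n ih => rw [halg.2.2, ih]; rfl

theorem ne_ratCast (halg : Alg2 p α b) (h0 : ∀ q : ℚ, α 0 ≠ q) (n : ℕ) (q : ℚ) : α n ≠ q := by
  induction n generalizing q with
  | zero => exact h0 q
  | succ n ih =>
    intro h
    have hinv := congrArg (·⁻¹) h
    simp only [halg.2.2, inv_inv] at hinv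
    exact ih (b n + q⁻¹) (by push_cast; linear_combination hinv)

theorem eq_of_succ_eq (halg : Alg2 p α b) {m n : ℕ} (hb : b m = b n)
    (h : α (m + 1) = α (n + 1)) : α m = α n := by
  have hrec (i : ℕ) : α i = b i + (α (i + 1))⁻¹ := by rw [halg.2.2, inv_inv]; ring
  rw [hrec m, hrec n, hb, h]

theorem norm_sub_le_of_even (halg : Alg2 p α b) {n : ℕ} (hn : Even n) :
    ‖α n - b n‖ ≤ (p : ℝ)⁻¹ :=
  Padic.norm_le_inv_of_norm_lt_one (halg.1 n hn).2.2

theorem le_norm_of_odd (halg : Alg2 p α b) (hα : ∀ n, α n ≠ b n) {n : ℕ} (hn : Odd n) :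
    (p : ℝ) ≤ ‖α n‖ := by
  obtain ⟨m, rfl⟩ := hn
  rw [halg.2.2, norm_inv, le_inv_comm₀ (by exact_mod_cast (Fact.out : p.Prime).pos)
    (norm_pos_iff.2 (sub_ne_zero.2 (hα _)))]
  exact halg.norm_sub_le_of_even (even_two_mul m)

theorem norm_sub_eq_one_of_odd (halg : Alg2 p α b) (hα : ∀ n, α n ≠ b n) {n : ℕ}
    (hn : Odd n) : ‖α n - b n‖ = 1 := by
  obtain ⟨c, -, ⟨hc, hb⟩ | ⟨hc, hb⟩⟩ := halg.2.1 n hn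
  · rwa [hb]
  have hp : (1 : ℝ) < p := mod_cast (Fact.out : p.Prime).one_lt
  have hc0 : c ≠ 0 := by
    rintro rfl
    simp only [Rat.cast_zero, sub_zero] at hc
    linarith [halg.le_norm_of_odd hα hn]
  set s : ℚ := if 0 < c then 1 else if c < 0 then -1 else 0
  have hs : ‖(s : ℚ_[p])‖ = 1 := by
    rcases hc0.lt_or_gt with h | h <;> simp [s, h, h.not_gt]
  rw [hb, show α n - ((c - s : ℚ) : ℚ_[p]) = s + (α n - c) by push_cast; ring,
    norm_add_eq_left_of_lt (hs ▸ hc), hs]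

theorem norm_succ_eq_one_of_odd (halg : Alg2 p α b) (hα : ∀ n, α n ≠ b n) {n : ℕ}
    (hn : Odd n) : ‖α (n + 1)‖ = 1 := by
  rw [halg.2.2, norm_inv, halg.norm_sub_eq_one_of_odd hα hn, inv_one]

theorem le_norm_b_of_odd (halg : Alg2 p α b) (hα : ∀ n, α n ≠ b n) {n : ℕ} (hn : Odd n) :
    (p : ℝ) ≤ ‖(b n : ℚ_[p])‖ := by
  have hp : (1 : ℝ) < p := mod_cast (Fact.out : p.Prime).one_lt
  have hαn := halg.le_norm_of_odd hα hn
  rwa [← Padic.norm_eq_of_norm_sub_lt_left (by rw [halg.norm_sub_eq_one_of_odd hα hn]; linarith)]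

theorem norm_b_succ_eq_one_of_odd (halg : Alg2 p α b) (hα : ∀ n, α n ≠ b n) {n : ℕ} (hn : Odd n) :
    ‖(b (n + 1) : ℚ_[p])‖ = 1 := by
  have hp : (1 : ℝ) < p := mod_cast (Fact.out : p.Prime).one_lt
  have hα1 := halg.norm_succ_eq_one_of_odd hα hn
  refine (Padic.norm_eq_of_norm_sub_lt_left ?_).symm.trans hα1
  rw [hα1]
  exact (halg.norm_sub_le_of_even hn.add_one).trans_lt (inv_lt_one_of_one_lt₀ hp)

theorem even_of_periodic (halg : Alg2 p α b) (hα : ∀ n, α n ≠ b n) {h k : ℕ}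
    (hper : ∀ n, h ≤ n → b (n + k) = b n) : Even k := by
  by_contra hk
  have hp : (1 : ℝ) < p := mod_cast (Fact.out : p.Prime).one_lt
  have hodd : Odd (2 * h + 1) := odd_two_mul_add_one h
  have hlarge := halg.le_norm_b_of_odd hα (hodd.add_one.add_odd (Nat.not_even_iff_odd.1 hk))
  rw [hper _ (by omega), halg.norm_b_succ_eq_one_of_odd hα hodd] at hlarge
  linarith

theorem norm_sub_succ (halg : Alg2 p α b) (hα : ∀ n, α n ≠ b n) {m k : ℕ}
    (hb : b (m + k) = b m) :
    ‖α (m + 1) - α (m + k + 1)‖ =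
      ‖α m - α (m + k)‖ / (‖α m - b m‖ * ‖α (m + k) - b (m + k)‖) := by
  have hm := sub_ne_zero.2 (hα m)
  have hmk := sub_ne_zero.2 (hα (m + k))
  rw [hb] at hmk ⊢
  rw [halg.2.2, halg.2.2, hb, inv_sub_inv hm hmk, norm_div, norm_mul, sub_sub_sub_cancel_right,
    norm_sub_rev]

theorem sq_mul_norm_sub_le (halg : Alg2 p α b) (hα : ∀ n, α n ≠ b n) {m k : ℕ} (hm : Even m)
    (hk : Even k) (hb₀ : b (m + k) = b m) (hb₁ : b (m + 1 + k) = b (m + 1)) :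
    (p : ℝ) ^ 2 * ‖α m - α (m + k)‖ ≤ ‖α (m + 2) - α (m + 2 + k)‖ := by
  have hp : (p : ℝ) ≠ 0 := mod_cast (Fact.out : p.Prime).ne_zero
  have hstep₁ := halg.norm_sub_succ hα hb₀
  have hstep₂ := halg.norm_sub_succ hα hb₁
  rw [halg.norm_sub_eq_one_of_odd hα hm.add_one,
    halg.norm_sub_eq_one_of_odd hα (hm.add_one.add_even hk), mul_one, div_one,
    show m + 1 + k = m + k + 1 by ring, hstep₁, show m + k + 1 + 1 = m + 2 + k by ring] at hstep₂
  rw [hstep₂, le_div_iff₀ (mul_pos (norm_pos_iff.2 (sub_ne_zero.2 (hα _)))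
    (norm_pos_iff.2 (sub_ne_zero.2 (hα _))))]
  calc (p : ℝ) ^ 2 * ‖α m - α (m + k)‖ * (‖α m - b m‖ * ‖α (m + k) - b (m + k)‖)
      ≤ (p : ℝ) ^ 2 * ‖α m - α (m + k)‖ * ((p : ℝ)⁻¹ * (p : ℝ)⁻¹) := by
        gcongr
        exacts [halg.norm_sub_le_of_even hm, halg.norm_sub_le_of_even (hm.add hk)]
    _ = ‖α m - α (m + k)‖ := by field_simp

/-- `α i - α (i + k)` gains a factor `p ^ 2` in norm every two steps from `i = n + 1` on,
yet stays bounded by `1`. -/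
theorem eq_of_periodic (halg : Alg2 p α b) (hα : ∀ n, α n ≠ b n) {h k n : ℕ}
    (hper : ∀ m, h ≤ m → b (m + k) = b m) (hn : Odd n) (hhn : h ≤ n) : α (n + k) = α n := by
  have hk := halg.even_of_periodic hα hper
  have hp : (1 : ℝ) < p := mod_cast (Fact.out : p.Prime).one_lt
  set u : ℕ → ℝ := fun i => ‖α (n + 1 + 2 * i) - α (n + 1 + 2 * i + k)‖
  have hgrow (i : ℕ) : ((p : ℝ) ^ 2) ^ i * u 0 ≤ u i := by
    induction i with
    | zero => simp
    | succ i ih =>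
      have hm : Even (n + 1 + 2 * i) := hn.add_one.add (even_two_mul i)
      calc ((p : ℝ) ^ 2) ^ (i + 1) * u 0 = (p : ℝ) ^ 2 * (((p : ℝ) ^ 2) ^ i * u 0) := by ring
        _ ≤ (p : ℝ) ^ 2 * u i := by gcongr
        _ ≤ u (i + 1) := by
          convert halg.sq_mul_norm_sub_le hα hm hk (hper _ (by omega)) (hper _ (by omega))
            using 4 <;> ring
  have hbound (i : ℕ) : u i ≤ 1 := by
    have hodd : Odd (n + 2 * i) := hn.add_even (even_two_mul i)
    calc u i ≤ max ‖α (n + 1 + 2 * i)‖ ‖α (n + 1 + 2 * i + k)‖ :=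
          norm_sub_le_max _ _
      _ = 1 := by
        rw [show n + 1 + 2 * i = n + 2 * i + 1 by ring, halg.norm_succ_eq_one_of_odd hα hodd,
          show n + 2 * i + 1 + k = n + 2 * i + k + 1 by ring,
          halg.norm_succ_eq_one_of_odd hα (hodd.add_even hk), max_self]
  have hu0 : u 0 ≤ 0 :=
    nonpos_of_forall_pow_mul_le (one_lt_pow₀ hp two_ne_zero) fun i => (hgrow i).trans (hbound i)
  have hsucc : α (n + k + 1) = α (n + 1) := by
    have h0 : α (n + 1) - α (n + 1 + k) = 0 := by simpa [u] using hu0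
    rw [add_right_comm]
    exact (sub_eq_zero.1 h0).symm
  exact halg.eq_of_succ_eq (hper n hhn) hsucc

theorem norm_completeQuotients_succ_le {z : ℚ_[p]} {n : ℕ}
    (h : (p : ℝ) ≤ ‖completeQuotients z b n - b n‖) :
    ‖completeQuotients z b (n + 1)‖ ≤ (p : ℝ)⁻¹ := by
  rw [completeQuotients, norm_inv]
  exact inv_anti₀ (by exact_mod_cast (Fact.out : p.Prime).pos) h

theorem le_norm_conj_sub_one (halg : Alg2 p α b) (hα : ∀ n, α n ≠ b n) (hp : p ≠ 2)
    (hα0 : ‖α 0‖ ≤ 1) : (p : ℝ) ≤ ‖completeQuotients (-α 0) b 1 - b 1‖ := by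
  have hp1 : (1 : ℝ) < p := mod_cast (Fact.out : p.Prime).one_lt
  obtain ⟨hfrac, habs, hnorm⟩ := halg.1 0 Even.zero
  have hb1 := halg.le_norm_b_of_odd hα odd_one
  have hγ1 : completeQuotients (-α 0) b 1 = -(α 0 + b 0)⁻¹ := by
    rw [completeQuotients, completeQuotients, ← neg_add', inv_neg]
  rcases hα0.lt_or_eq with hlt | heq
  · have hb0 : b 0 = 0 := by
      refine hfrac.eq_zero_of_norm_lt_one ?_ (by linarith [abs_nonneg (b 0)])
      calc ‖(b 0 : ℚ_[p])‖ = ‖α 0 - (α 0 - b 0)‖ := by rw [sub_sub_cancel]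
        _ ≤ max ‖α 0‖ ‖α 0 - b 0‖ := norm_sub_le_max _ _
        _ < 1 := max_lt hlt hnorm
    have hγ1' : completeQuotients (-α 0) b 1 - b 1 = -(α 1 + b 1) := by
      rw [hγ1, halg.2.2, hb0, Rat.cast_zero, add_zero, sub_zero, neg_add']
    rw [hγ1', norm_neg, Padic.norm_add_eq_of_norm_sub_lt hp
      (by rw [halg.norm_sub_eq_one_of_odd hα odd_one]; linarith)]
    exact hb1
  · have hb0 : ‖(b 0 : ℚ_[p])‖ = 1 :=
      (Padic.norm_eq_of_norm_sub_lt_left (heq ▸ hnorm)).symm.trans heq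
    have hγ1' : ‖completeQuotients (-α 0) b 1‖ = 1 := by
      rw [hγ1, norm_neg, norm_inv, Padic.norm_add_eq_of_norm_sub_lt hp (hb0 ▸ hnorm), hb0, inv_one]
    rwa [norm_sub_eq_right_of_lt (by rw [hγ1']; linarith)]

theorem le_norm_conj_sub_of_odd (halg : Alg2 p α b) (hα : ∀ n, α n ≠ b n) (hp : p ≠ 2)
    (hα0 : ‖α 0‖ ≤ 1) {n : ℕ} (hn : Odd n) :
    (p : ℝ) ≤ ‖completeQuotients (-α 0) b n - b n‖ := by
  have hp1 : (1 : ℝ) < p := mod_cast (Fact.out : p.Prime).one_lt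
  obtain ⟨m, rfl⟩ := hn
  induction m with
  | zero => exact halg.le_norm_conj_sub_one hα hp hα0
  | succ m ih =>
    have hodd : Odd (2 * m + 1) := odd_two_mul_add_one m
    have hb₁ := halg.norm_b_succ_eq_one_of_odd hα hodd
    have hγ₁ : ‖completeQuotients (-α 0) b (2 * m + 1 + 1) - b (2 * m + 1 + 1)‖ = 1 := by
      rw [norm_sub_eq_right_of_lt (by
        rw [hb₁]; exact (norm_completeQuotients_succ_le ih).trans_lt (inv_lt_one_of_one_lt₀ hp1)),
        hb₁]
    have hγ₂ : ‖completeQuotients (-α 0) b (2 * (m + 1) + 1)‖ = 1 := by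
      rw [completeQuotients, norm_inv, show 2 * (m + 1) = 2 * m + 1 + 1 by ring, hγ₁, inv_one]
    have hb₂ := halg.le_norm_b_of_odd hα (odd_two_mul_add_one (m + 1))
    rwa [norm_sub_eq_right_of_lt (by rw [hγ₂]; linarith)]

theorem norm_conj_le_of_even (halg : Alg2 p α b) (hα : ∀ n, α n ≠ b n) (hp : p ≠ 2)
    (hα0 : ‖α 0‖ ≤ 1) {n : ℕ} (hn : Even n) (hn0 : n ≠ 0) :
    ‖completeQuotients (-α 0) b n‖ ≤ (p : ℝ)⁻¹ := by
  obtain ⟨m, rfl⟩ := Nat.exists_eq_add_one_of_ne_zero hn0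
  exact norm_completeQuotients_succ_le
    (halg.le_norm_conj_sub_of_odd hα hp hα0 (Nat.even_add_one.1 hn |> Nat.not_even_iff_odd.1))

/-- `b m - b n` is the difference of two conjugate complete quotients of norm `≤ p⁻¹`, and a
`p`-adic fraction of absolute value `< p` and norm `< 1` vanishes. -/
theorem b_eq_of_conj_succ_eq (halg : Alg2 p α b) (hα : ∀ n, α n ≠ b n) (hp : p ≠ 2)
    (hα0 : ‖α 0‖ ≤ 1) {m n : ℕ} (hm : Even m) (hm0 : m ≠ 0) (hn : Even n) (hn0 : n ≠ 0)
    (h : completeQuotients (-α 0) b (m + 1) = completeQuotients (-α 0) b (n + 1)) :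
    b m = b n := by
  have hp1 : (1 : ℝ) < p := mod_cast (Fact.out : p.Prime).one_lt
  have hsub : ((b m - b n : ℚ) : ℚ_[p]) =
      completeQuotients (-α 0) b m - completeQuotients (-α 0) b n := by
    have := inv_injective h
    push_cast
    linear_combination -this
  obtain ⟨hfm, habsm, -⟩ := halg.1 m hm
  obtain ⟨hfn, habsn, -⟩ := halg.1 n hn
  refine sub_eq_zero.1 ((hfm.sub hfn).eq_zero_of_norm_lt_one ?_ ?_)
  · rw [hsub]
    calc _ ≤ max ‖completeQuotients (-α 0) b m‖ ‖completeQuotients (-α 0) b n‖ :=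
          norm_sub_le_max _ _
      _ ≤ (p : ℝ)⁻¹ := max_le (halg.norm_conj_le_of_even hα hp hα0 hm hm0)
          (halg.norm_conj_le_of_even hα hp hα0 hn hn0)
      _ < 1 := inv_lt_one_of_one_lt₀ hp1
  · calc |b m - b n| ≤ |b m| + |b n| := abs_sub _ _
      _ < p := by linarith

end Alg2

/-- If `D` is a nonsquare integer, `α₀² = D` in `ℚ_p`, and the Browkin II
expansion of `α₀` is periodic, then the pre-period (the least `h` admitting a
period `k ≥ 1` valid from index `h` on) has length either `1` or even. -/
theorem stmt_17 (p : ℕ) [Fact p.Prime] (hp : p ≠ 2) (D : ℤ)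
    (hD : ¬ ∃ z : ℤ, z * z = D)
    (α₀ : ℚ_[p]) (hsq : α₀ ^ 2 = (D : ℚ_[p]))
    (α : ℕ → ℚ_[p]) (b : ℕ → ℚ) (h0 : α 0 = α₀) (halg : Alg2 p α b)
    (hper : ∃ h k : ℕ, 1 ≤ k ∧ ∀ n, h ≤ n → b (n + k) = b n) :
    sInf {h : ℕ | ∃ k : ℕ, 1 ≤ k ∧ ∀ n, h ≤ n → b (n + k) = b n} = 1 ∨
      Even (sInf {h : ℕ | ∃ k : ℕ, 1 ≤ k ∧ ∀ n, h ≤ n → b (n + k) = b n}) := by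
  subst h0
  set S := {h : ℕ | ∃ k : ℕ, 1 ≤ k ∧ ∀ n, h ≤ n → b (n + k) = b n}
  have hDq : ∀ r : ℚ, r ^ 2 ≠ D := fun r hr ↦ by
    obtain ⟨z, hz⟩ := Rat.isSquare_intCast_iff.1 ⟨r, by rw [← hr, sq]⟩
    exact hD ⟨z, hz.symm⟩
  have hsqQ : α 0 ^ 2 = ((D : ℚ) : ℚ_[p]) := by rw [hsq, Rat.cast_intCast]
  have hirr : ∀ q : ℚ, α 0 ≠ q := fun q hq ↦ hDq q (by exact_mod_cast hq ▸ hsqQ)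
  have hα : ∀ n, α n ≠ b n := fun n ↦ halg.ne_ratCast hirr n (b n)
  have hα0 : ‖α 0‖ ≤ 1 := (pow_le_one_iff_of_nonneg (norm_nonneg _) two_ne_zero).1
    (by rw [← norm_pow, hsq]; exact Padic.norm_int_le_one D)
  by_contra! hS
  obtain ⟨j, hj⟩ := Nat.not_even_iff_odd.1 hS.2
  obtain ⟨k, hk1, hk⟩ : sInf S ∈ S := Nat.sInf_mem hper
  have hkev := halg.even_of_periodic hα hk
  have hαper := halg.eq_of_periodic hα hk (odd_two_mul_add_one j) hj.le
  rw [halg.eq_completeQuotients, halg.eq_completeQuotients (2 * j + 1)] at hαper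
  have hγper := completeQuotients_neg_eq_of_eq hDq hsqQ b hαper
  rw [add_right_comm] at hγper
  have hj0 : 2 * j ≠ 0 := by omega
  have hbj := halg.b_eq_of_conj_succ_eq hα hp hα0 ((even_two_mul j).add hkev) (by omega)
    (even_two_mul j) hj0 hγper
  have hmem : 2 * j ∈ S := ⟨k, hk1, fun n hn ↦ by
    rcases hn.eq_or_lt with rfl | hlt
    exacts [hbj, hk n (by omega)]⟩
  have := Nat.sInf_le hmem
  omega
end

section
/- Let p be an odd prime and let α₀ ∈ ℚ_p be a quadratic irrational with conjugate ᾱ₀, and assume ‖α₀‖_p ≥ 1 and ‖ᾱ₀‖_p < 1. Let (α_n), (b_n) be the sequences produced by Algorithm (3) applied to α₀, and define the conjugate complete quotients by ᾱ_0 = ᾱ₀ and ᾱ_{n+1} = (ᾱ_n − b_n)⁻¹. Then for every n ≥ 0, b_n ≠ 0 and ‖ᾱ_{n+1}‖_p = ‖b_n‖_p⁻¹; in particular, ‖ᾱ_n‖_p ≤ 1 for every odd n and ‖ᾱ_n‖_p < 1 for every even n. -/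
/-- Algorithm (3): `b n = s (α n)` for even `n`, `b n = t (α n)` for odd `n`,
and `α (n + 1) = (α n - b n)⁻¹`. -/
def Alg3 (p : ℕ) [Fact p.Prime] (α : ℕ → ℚ_[p]) (b : ℕ → ℚ) : Prop :=
  (∀ n, Even n → IsIntFloor p (α n) (b n)) ∧
  (∀ n, Odd n → IsFracFloor p (α n) (b n)) ∧
  ∀ n, α (n + 1) = (α n - (b n : ℚ_[p]))⁻¹

/-!
Track the parity-dependent bounds `‖ᾱₙ‖ < 1 ≤ ‖αₙ‖` (n even) and `‖ᾱₙ‖ ≤ 1 < ‖αₙ‖` (n odd).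
In either case the floor `bₙ` is closer to `αₙ` than `αₙ` is to `0`, so `‖bₙ‖ = ‖αₙ‖ ≥ 1`, and
`‖ᾱₙ‖ < ‖bₙ‖`, so `‖ᾱₙ₊₁‖ = ‖ᾱₙ - bₙ‖⁻¹ = ‖bₙ‖⁻¹` by the isosceles property of the `p`-adic
norm. Since `‖αₙ - bₙ‖` is `< 1` resp. `≤ 1`, and is nonzero because `αₙ` stays irrational,
the bounds pass from `n` to `n + 1`.
-/

section Ultrametric

variable {E : Type*} [SeminormedAddCommGroup E] [IsUltrametricDist E]

lemma norm_sub_eq_left_of_norm_lt {x y : E} (h : ‖y‖ < ‖x‖) : ‖x - y‖ = ‖x‖ := by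
  have hne : ‖x‖ ≠ ‖-y‖ := by rw [norm_neg]; exact h.ne'
  rw [sub_eq_add_neg, IsUltrametricDist.norm_add_eq_max_of_norm_ne_norm hne, norm_neg,
    max_eq_left h.le]

lemma norm_eq_of_norm_sub_lt {x y : E} (h : ‖x - y‖ < ‖x‖) : ‖y‖ = ‖x‖ := by
  simpa using norm_sub_eq_left_of_norm_lt h

end Ultrametric

section UltrametricField

variable {K : Type*} [NormedField K] [IsUltrametricDist K] {a b β : K}

lemma norm_inv_sub_of_norm_lt (h : ‖β‖ < ‖b‖) : ‖(β - b)⁻¹‖ = ‖b‖⁻¹ := by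
  rw [norm_inv, norm_sub_rev, norm_sub_eq_left_of_norm_lt h]

lemma norm_inv_sub_of_norm_sub_lt (hab : ‖a - b‖ < ‖a‖) (hβ : ‖β‖ < ‖a‖) :
    ‖(β - b)⁻¹‖ = ‖a‖⁻¹ := by
  rw [← norm_eq_of_norm_sub_lt hab] at hβ ⊢
  exact norm_inv_sub_of_norm_lt hβ

lemma one_lt_norm_inv_sub_and_norm_inv_sub_le_one (ha : 1 ≤ ‖a‖) (hβ : ‖β‖ < 1)
    (hab : ‖a - b‖ < 1) (hne : a ≠ b) : 1 < ‖(a - b)⁻¹‖ ∧ ‖(β - b)⁻¹‖ ≤ 1 := by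
  refine ⟨?_, ?_⟩
  · rw [norm_inv]
    exact (one_lt_inv₀ (norm_pos_iff.mpr (sub_ne_zero.mpr hne))).mpr hab
  · rw [norm_inv_sub_of_norm_sub_lt (hab.trans_le ha) (hβ.trans_le ha)]
    exact inv_le_one_of_one_le₀ ha

lemma one_le_norm_inv_sub_and_norm_inv_sub_lt_one (ha : 1 < ‖a‖) (hβ : ‖β‖ ≤ 1)
    (hab : ‖a - b‖ ≤ 1) (hne : a ≠ b) : 1 ≤ ‖(a - b)⁻¹‖ ∧ ‖(β - b)⁻¹‖ < 1 := by
  refine ⟨?_, ?_⟩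
  · rw [norm_inv]
    exact (one_le_inv₀ (norm_pos_iff.mpr (sub_ne_zero.mpr hne))).mpr hab
  · rw [norm_inv_sub_of_norm_sub_lt (hab.trans_lt ha) (hβ.trans_lt ha)]
    exact inv_lt_one_of_one_lt₀ ha

end UltrametricField

lemma inv_sub_ratCast_ne_ratCast {K : Type*} [Field K] [CharZero K] {x : K}
    (hx : ∀ q : ℚ, x ≠ q) (b q : ℚ) : (x - b)⁻¹ ≠ q := by
  intro h
  rcases eq_or_ne q 0 with rfl | hq
  · exact hx b (sub_eq_zero.mp (by simpa using h))
  · refine hx (q⁻¹ + b) ?_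
    rw [Rat.cast_add, Rat.cast_inv, ← h, inv_inv, sub_add_cancel]

namespace Alg3

variable {p : ℕ} [Fact p.Prime] {α : ℕ → ℚ_[p]} {b : ℕ → ℚ}

lemma ne_ratCast (halg : Alg3 p α b) (hirr : ∀ q : ℚ, α 0 ≠ q) (n : ℕ) (q : ℚ) :
    α n ≠ q := by
  induction n generalizing q with
  | zero => exact hirr q
  | succ n ih => rw [halg.2.2 n]; exact inv_sub_ratCast_ne_ratCast ih (b n) q

variable {β : ℕ → ℚ_[p]}

lemma norm_bounds (halg : Alg3 p α b) (hirr : ∀ q : ℚ, α 0 ≠ q)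
    (hβ : ∀ n, β (n + 1) = (β n - (b n : ℚ_[p]))⁻¹) (hβ0 : ‖β 0‖ < 1) (hα0 : 1 ≤ ‖α 0‖)
    (k : ℕ) : (‖β (2 * k)‖ < 1 ∧ 1 ≤ ‖α (2 * k)‖) ∧
      (‖β (2 * k + 1)‖ ≤ 1 ∧ 1 < ‖α (2 * k + 1)‖) := by
  obtain ⟨hev, hod, hrec⟩ := halg
  have hne := ne_ratCast ⟨hev, hod, hrec⟩ hirr
  have odd_of_even : ∀ k, ‖β (2 * k)‖ < 1 → 1 ≤ ‖α (2 * k)‖ →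
      ‖β (2 * k + 1)‖ ≤ 1 ∧ 1 < ‖α (2 * k + 1)‖ := fun k hβk hαk => by
    obtain ⟨hα', hβ'⟩ := one_lt_norm_inv_sub_and_norm_inv_sub_le_one hαk hβk
      (hev _ (even_two_mul k)).2.2 (hne _ _)
    exact ⟨hβ _ ▸ hβ', hrec _ ▸ hα'⟩
  induction k with
  | zero => exact ⟨⟨hβ0, hα0⟩, odd_of_even 0 hβ0 hα0⟩
  | succ k ih =>
    obtain ⟨hα', hβ'⟩ := one_le_norm_inv_sub_and_norm_inv_sub_lt_one ih.2.2 ih.2.1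
      (hod _ (odd_two_mul_add_one k)).2.2 (hne _ _)
    have heven : ‖β (2 * (k + 1))‖ < 1 ∧ 1 ≤ ‖α (2 * (k + 1))‖ :=
      ⟨hβ _ ▸ hβ', hrec _ ▸ hα'⟩
    exact ⟨heven, odd_of_even _ heven.1 heven.2⟩

lemma floor_norm_bounds (halg : Alg3 p α b) (hirr : ∀ q : ℚ, α 0 ≠ q)
    (hβ : ∀ n, β (n + 1) = (β n - (b n : ℚ_[p]))⁻¹) (hβ0 : ‖β 0‖ < 1) (hα0 : 1 ≤ ‖α 0‖)
    (n : ℕ) : 1 ≤ ‖α n‖ ∧ ‖α n - b n‖ < ‖α n‖ ∧ ‖β n‖ < ‖α n‖ := by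
  have hbd := norm_bounds halg hirr hβ hβ0 hα0
  rcases Nat.even_or_odd' n with ⟨k, rfl | rfl⟩
  · obtain ⟨hβk, hαk⟩ := (hbd k).1
    exact ⟨hαk, (halg.1 _ (even_two_mul k)).2.2.trans_le hαk, hβk.trans_le hαk⟩
  · obtain ⟨hβk, hαk⟩ := (hbd k).2
    exact ⟨hαk.le, (halg.2.1 _ (odd_two_mul_add_one k)).2.2.trans_lt hαk, hβk.trans_lt hαk⟩

end Alg3

theorem stmt_18_general (p : ℕ) [Fact p.Prime]
    (α₀ : ℚ_[p]) (hirr : ∀ q : ℚ, α₀ ≠ (q : ℚ_[p]))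
    (r : ℚ)
    (hn1 : 1 ≤ ‖α₀‖) (hn2 : ‖(r : ℚ_[p]) - α₀‖ < 1)
    (α : ℕ → ℚ_[p]) (b : ℕ → ℚ) (h0 : α 0 = α₀) (halg : Alg3 p α b)
    (β : ℕ → ℚ_[p]) (hβ0 : β 0 = (r : ℚ_[p]) - α₀)
    (hβ : ∀ n, β (n + 1) = (β n - (b n : ℚ_[p]))⁻¹) :
    (∀ n : ℕ, b n ≠ 0 ∧ ‖β (n + 1)‖ = ‖((b n : ℚ) : ℚ_[p])‖⁻¹) ∧
      (∀ n : ℕ, Odd n → ‖β n‖ ≤ 1) ∧ (∀ n : ℕ, Even n → ‖β n‖ < 1) := by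
  subst h0
  have hβ0' : ‖β 0‖ < 1 := hβ0 ▸ hn2
  have hbd := halg.norm_bounds hirr hβ hβ0' hn1
  refine ⟨fun n => ?_, fun n hn => ?_, fun n hn => ?_⟩
  · obtain ⟨hαn, hfloor, hβn⟩ := halg.floor_norm_bounds hirr hβ hβ0' hn1 n
    have hb : ‖(b n : ℚ_[p])‖ = ‖α n‖ := norm_eq_of_norm_sub_lt hfloor
    refine ⟨fun h0 => ?_, ?_⟩
    · rw [h0, Rat.cast_zero, norm_zero] at hb
      linarith
    · rw [hβ, hb, norm_inv_sub_of_norm_sub_lt hfloor hβn]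
  · obtain ⟨k, rfl⟩ := hn
    exact (hbd k).2.1
  · obtain ⟨k, rfl⟩ := hn.two_dvd
    exact (hbd k).1.1

/-- For `α₀` a quadratic irrational with `‖α₀‖_p ≥ 1`, `‖ᾱ₀‖_p < 1`, Algorithm (3)
sequences `(α n)`, `(b n)`, and conjugate complete quotients `β` (with
`β 0 = ᾱ₀ = r - α₀` and `β (n+1) = (β n - b n)⁻¹`): every `b n` is nonzero,
`‖β (n+1)‖_p = ‖b n‖_p⁻¹`, and `‖β n‖_p ≤ 1` for odd `n`, `‖β n‖_p < 1` for even `n`. -/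
theorem stmt_18 (p : ℕ) [Fact p.Prime] (hp : p ≠ 2)
    (α₀ : ℚ_[p]) (hirr : ∀ q : ℚ, α₀ ≠ (q : ℚ_[p]))
    (r s : ℚ) (hquad : α₀ ^ 2 = (r : ℚ_[p]) * α₀ + (s : ℚ_[p]))
    (hn1 : 1 ≤ ‖α₀‖) (hn2 : ‖(r : ℚ_[p]) - α₀‖ < 1)
    (α : ℕ → ℚ_[p]) (b : ℕ → ℚ) (h0 : α 0 = α₀) (halg : Alg3 p α b)
    (β : ℕ → ℚ_[p]) (hβ0 : β 0 = (r : ℚ_[p]) - α₀)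
    (hβ : ∀ n, β (n + 1) = (β n - (b n : ℚ_[p]))⁻¹) :
    (∀ n : ℕ, b n ≠ 0 ∧ ‖β (n + 1)‖ = ‖((b n : ℚ) : ℚ_[p])‖⁻¹) ∧
      (∀ n : ℕ, Odd n → ‖β n‖ ≤ 1) ∧ (∀ n : ℕ, Even n → ‖β n‖ < 1) :=
  stmt_18_general p α₀ hirr r hn1 hn2 α b h0 halg β hβ0 hβ
end
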